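/- For every connected graph G, γ_coe(G ∘ K_1) = |V(G)| + |E_V(G)|, where E_V(G) denotes the set of even-degree vertices of G. -/

import Mathlib

open SimpleGraph

/-- `D` is a dominating set of `G`. -/
def IsDomSet {V : Type*} (G : SimpleGraph V) (D : Set V) : Prop :=
  ∀ v ∉ D, ∃ u ∈ D, G.Adj u v

/-- `D` is a co-even dominating set of `G`: a dominating set such that
every vertex outside `D` has even degree. -/
def IsCoEvenDomSet {V : Type*} (G : SimpleGraph V) (D : Set V) : Prop :=
  IsDomSet G D ∧ ∀ v ∉ D, Even (G.neighborSet v).ncard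

/-- The domination number. -/
noncomputable def gammaD {V : Type*} (G : SimpleGraph V) : ℕ :=
  sInf {n | ∃ D : Set V, IsDomSet G D ∧ D.ncard = n}

/-- The co-even domination number. -/
noncomputable def gammaCoe {V : Type*} (G : SimpleGraph V) : ℕ :=
  sInf {n | ∃ D : Set V, IsCoEvenDomSet G D ∧ D.ncard = n}

/-- The set of vertices of odd degree. -/
def oddVerts {V : Type*} (G : SimpleGraph V) : Set V :=
  {v | Odd (G.neighborSet v).ncard}

/-- The set of vertices of even degree. -/
def evenVerts {V : Type*} (G : SimpleGraph V) : Set V :=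
  {v | Even (G.neighborSet v).ncard}

/-- The join `G + H` of two graphs. -/
def joinG {V W : Type*} (G : SimpleGraph V) (H : SimpleGraph W) : SimpleGraph (V ⊕ W) :=
  SimpleGraph.fromRel (fun a b =>
    match a, b with
    | Sum.inl u, Sum.inl v => G.Adj u v
    | Sum.inr u, Sum.inr v => H.Adj u v
    | _, _ => True)

/-- The corona `G ∘ H`: one copy of `G` and `|V(G)|` copies of `H`,
joining the `i`-th vertex of `G` to every vertex of the `i`-th copy of `H`. -/
def corona {V W : Type*} (G : SimpleGraph V) (H : SimpleGraph W) : SimpleGraph (V ⊕ V × W) :=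
  SimpleGraph.fromRel (fun a b =>
    match a, b with
    | Sum.inl u, Sum.inl v => G.Adj u v
    | Sum.inr u, Sum.inr v => u.1 = v.1 ∧ H.Adj u.2 v.2
    | Sum.inl u, Sum.inr v => u = v.1
    | Sum.inr _, Sum.inl _ => False)

/-- The neighbourhood corona `G ⋆ H`: one copy of `G` and `|V(G)|` copies of `H`,
joining every neighbour of the `i`-th vertex of `G` to every vertex of the
`i`-th copy of `H`. -/
def ncorona {V W : Type*} (G : SimpleGraph V) (H : SimpleGraph W) : SimpleGraph (V ⊕ V × W) :=
  SimpleGraph.fromRel (fun a b =>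
    match a, b with
    | Sum.inl u, Sum.inl v => G.Adj u v
    | Sum.inr u, Sum.inr v => u.1 = v.1 ∧ H.Adj u.2 v.2
    | Sum.inl u, Sum.inr v => G.Adj u v.1
    | Sum.inr _, Sum.inl _ => False)

/-- The Hajós sum `G₁(x₁y₁) +_H G₂(x₂y₂)`: delete edges `x₁y₁` and `x₂y₂`,
identify `x₁` with `x₂` (represented here by `Sum.inr x₂`), and add the edge `y₁y₂`. -/
def hajos {V₁ V₂ : Type*} (G₁ : SimpleGraph V₁) (G₂ : SimpleGraph V₂)
    (x₁ y₁ : V₁) (x₂ y₂ : V₂) : SimpleGraph ({v : V₁ // v ≠ x₁} ⊕ V₂) :=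
  SimpleGraph.fromRel (fun a b =>
    match a, b with
    | Sum.inl u, Sum.inl v => G₁.Adj u.1 v.1
    | Sum.inr u, Sum.inr v => G₂.Adj u v ∧ ¬(u = x₂ ∧ v = y₂) ∧ ¬(u = y₂ ∧ v = x₂)
    | Sum.inl u, Sum.inr v => (v = x₂ ∧ G₁.Adj x₁ u.1 ∧ u.1 ≠ y₁) ∨ (u.1 = y₁ ∧ v = y₂)
    | Sum.inr _, Sum.inl _ => False)

/-! Every vertex of odd degree lies in every co-even dominating set, so whenever the odd-degree
vertices already dominate, they form the unique minimum one. In `G ∘ K₁` the odd-degree vertices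
are the pendant vertices (degree 1) and the vertices of even degree in `G` (degree raised by
one), and the pendant vertices alone dominate. -/

section CoEven

variable {V : Type*} (G : SimpleGraph V)

theorem oddVerts_subset_of_isCoEvenDomSet {D : Set V} (hD : IsCoEvenDomSet G D) :
    oddVerts G ⊆ D := fun v hv => by
  by_contra hvD
  exact Nat.not_even_iff_odd.mpr hv (hD.2 v hvD)

theorem isCoEvenDomSet_oddVerts (h : IsDomSet G (oddVerts G)) :
    IsCoEvenDomSet G (oddVerts G) :=
  ⟨h, fun _ hv => Nat.not_odd_iff_even.mp hv⟩

theorem gammaCoe_eq_ncard_oddVerts [Finite V] (h : IsDomSet G (oddVerts G)) :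
    gammaCoe G = (oddVerts G).ncard := by
  have hmem : (oddVerts G).ncard ∈ {n | ∃ D : Set V, IsCoEvenDomSet G D ∧ D.ncard = n} :=
    ⟨_, isCoEvenDomSet_oddVerts G h, rfl⟩
  refine le_antisymm (Nat.sInf_le hmem) (le_csInf ⟨_, hmem⟩ ?_)
  rintro _ ⟨D, hD, rfl⟩
  exact Set.ncard_le_ncard (oddVerts_subset_of_isCoEvenDomSet G hD)

end CoEven

section Corona

variable {V W : Type*} [Unique W] (G : SimpleGraph V) (H : SimpleGraph W)

theorem corona_neighborSet_inr (p : V × W) :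
    (corona G H).neighborSet (Sum.inr p) = {Sum.inl p.1} := by
  ext (u | q)
  · simp [corona, eq_comm]
  · simp [corona, Subsingleton.elim p.2 q.2]

theorem corona_neighborSet_inl (v : V) :
    (corona G H).neighborSet (Sum.inl v) =
      Sum.inl '' G.neighborSet v ∪ {Sum.inr (v, default)} := by
  ext (u | q)
  · simpa [corona, G.adj_comm u] using G.ne_of_adj
  · simp [corona, Prod.ext_iff, eq_comm (a := v), Unique.eq_default q.2]

theorem odd_ncard_corona_neighborSet_inl_iff [Finite V] (v : V) :
    Odd ((corona G H).neighborSet (Sum.inl v)).ncard ↔ v ∈ evenVerts G := by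
  rw [corona_neighborSet_inl, Set.ncard_union_eq (by simp) (Set.toFinite _) (Set.toFinite _),
    Set.ncard_image_of_injective _ Sum.inl_injective, Set.ncard_singleton, Nat.odd_add_one,
    Nat.not_odd_iff_even]
  rfl

theorem oddVerts_corona [Finite V] :
    oddVerts (corona G H) = Sum.inl '' evenVerts G ∪ Set.range Sum.inr := by
  ext (v | p)
  · simp [oddVerts, odd_ncard_corona_neighborSet_inl_iff]
  · simp [oddVerts, corona_neighborSet_inr]

theorem isDomSet_corona_oddVerts [Finite V] : IsDomSet (corona G H) (oddVerts (corona G H)) := by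
  rw [oddVerts_corona]
  rintro (v | p) hv
  · refine ⟨Sum.inr (v, default), Or.inr ⟨_, rfl⟩, ?_⟩
    simp [corona]
  · exact absurd (Or.inr ⟨p, rfl⟩) hv

theorem ncard_oddVerts_corona [Finite V] :
    (oddVerts (corona G H)).ncard = Nat.card V + (evenVerts G).ncard := by
  rw [oddVerts_corona, Set.ncard_union_eq (by simp [Set.disjoint_left]) (Set.toFinite _)
      (Set.toFinite _), Set.ncard_image_of_injective _ Sum.inl_injective,
    Set.ncard_range_of_injective Sum.inr_injective, Nat.card_prod, Nat.card_unique (α := W),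
    mul_one, add_comm]

end Corona

theorem stmt12_general {V : Type*} [Fintype V] (G : SimpleGraph V) :
    gammaCoe (corona G (⊤ : SimpleGraph (Fin 1))) =
      Fintype.card V + (evenVerts G).ncard := by
  rw [gammaCoe_eq_ncard_oddVerts _ (isDomSet_corona_oddVerts G _), ncard_oddVerts_corona,
    Nat.card_eq_fintype_card]

theorem stmt12 {V : Type*} [Fintype V] (G : SimpleGraph V) (hG : G.Connected) :
    gammaCoe (corona G (⊤ : SimpleGraph (Fin 1))) =
      Fintype.card V + (evenVerts G).ncard :=
  stmt12_general G
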